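/- arXiv:2102.04423 — 4 statements merged into one kernel-verified Lean document; each statement's English description precedes it below -/
import Mathlib

section
/- Suppose T_n is a sequence of real random variables converging in distribution to a law with continuous strictly increasing CDF H, and F_n is a sequence of random CDFs with sup_x |F_n(x) − H_n(x)| → 0 in probability, where H_n is the CDF of T_n and sup_x |H_n(x) − H(x)| → 0. Then the random variable F_n(T_n) converges in distribution to the uniform distribution on [0,1]. -/
/-!
Write `Yₙ = H(Tₙ)`. Since `H` is a continuous increasing bijection `ℝ → (0,1)`, the event
`{Yₙ ≤ H t}` is `{Tₙ ≤ t}`, so the CDF of `Yₙ` is `Hₙ ∘ H⁻¹` on `(0,1)`, which is uniformly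
`δ`-close to the uniform CDF once `Hₙ` is `δ`-close to `H`. Outside an event of probability
`< δ`, `|Fₙ(Tₙ) − Yₙ| < 2δ`, so the CDF of `Fₙ(Tₙ)` at `x` lies, up to `δ`, between the CDFs
of `Yₙ` at `x − 2δ` and `x + 2δ`; as the uniform CDF is `1`-Lipschitz, it is `4δ`-close to `U(x)`.
-/

open MeasureTheory Filter Set Topology

def uniformCDF (x : ℝ) : ℝ := max 0 (min x 1)

lemma abs_uniformCDF_sub_le (a b : ℝ) : |uniformCDF a - uniformCDF b| ≤ |a - b| := by
  simpa [uniformCDF, Set.coe_projIcc, min_comm] using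
    Set.abs_projIcc_sub_projIcc (zero_le_one' ℝ) (c := a) (d := b)

lemma range_eq_Ioo_of_strictMono {H : ℝ → ℝ} (hcont : Continuous H) (hmono : StrictMono H)
    (hBot : Tendsto H atBot (𝓝 0)) (hTop : Tendsto H atTop (𝓝 1)) :
    range H = Ioo 0 1 := by
  refine Subset.antisymm ?_ fun y hy => ?_
  · rintro _ ⟨t, rfl⟩
    exact ⟨hmono.monotone.le_of_tendsto hBot (t - 1) |>.trans_lt (hmono (sub_one_lt t)),
      (hmono (lt_add_one t)).trans_le (hmono.monotone.ge_of_tendsto hTop (t + 1))⟩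
  · obtain ⟨a, ha⟩ := (hBot.eventually (eventually_lt_nhds hy.1)).exists
    obtain ⟨b, hb⟩ := (hTop.eventually (eventually_gt_nhds hy.2)).exists
    exact intermediate_value_univ a b hcont ⟨ha.le, hb.le⟩

section Measure

variable {Ω : Type*} [MeasurableSpace Ω] (μ : Measure Ω)

/-- An approximate probability integral transform. -/
lemma abs_measureReal_comp_le_sub_uniformCDF_le [IsProbabilityMeasure μ] {H : ℝ → ℝ}
    (hrange : range H = Ioo 0 1) (hmono : StrictMono H) {X : Ω → ℝ} {δ : ℝ}
    (hX : ∀ t, |μ.real {ω | X ω ≤ t} - H t| ≤ δ) (y : ℝ) :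
    |μ.real {ω | H (X ω) ≤ y} - uniformCDF y| ≤ δ := by
  have hδ : 0 ≤ δ := (abs_nonneg _).trans (hX 0)
  have hH : ∀ t, H t ∈ Ioo 0 1 := fun t => hrange ▸ mem_range_self t
  rcases le_or_gt y 0 with hy0 | hy0
  · have hempty : {ω | H (X ω) ≤ y} = ∅ :=
      eq_empty_of_forall_notMem fun ω hω => (hH (X ω)).1.not_ge (le_trans hω hy0)
    simp [hempty, uniformCDF, hy0, hδ]
  rcases le_or_gt 1 y with hy1 | hy1
  · have huniv : {ω | H (X ω) ≤ y} = univ :=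
      eq_univ_of_forall fun ω => (hH (X ω)).2.le.trans hy1
    simp [huniv, uniformCDF, hy1, hδ]
  obtain ⟨t, rfl⟩ : y ∈ range H := hrange ▸ ⟨hy0, hy1⟩
  have hevent : {ω | H (X ω) ≤ H t} = {ω | X ω ≤ t} := by
    simp only [hmono.le_iff_le]
  simpa [hevent, uniformCDF, hy0.le, hy1.le] using hX t

lemma measureReal_le_le_add_of_abs_sub_lt [IsFiniteMeasure μ] {Y Z : Ω → ℝ} {B : Set Ω} {c : ℝ}
    (h : ∀ ω ∉ B, |Z ω - Y ω| < c) (x : ℝ) :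
    μ.real {ω | Z ω ≤ x} ≤ μ.real {ω | Y ω ≤ x + c} + μ.real B := by
  calc μ.real {ω | Z ω ≤ x} ≤ μ.real ({ω | Y ω ≤ x + c} ∪ B) := by
        refine measureReal_mono fun ω hω => ?_
        by_cases hB : ω ∈ B
        · exact Or.inr hB
        · have hZ : Z ω ≤ x := hω
          exact Or.inl (show Y ω ≤ x + c by linarith [(abs_lt.1 (h ω hB)).1])
    _ ≤ _ := measureReal_union_le _ _

lemma abs_measureReal_estimator_le [IsProbabilityMeasure μ] {H : ℝ → ℝ}
    (hrange : range H = Ioo 0 1) (hmono : StrictMono H)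
    {X : Ω → ℝ} {G : Ω → ℝ → ℝ} {B : Set Ω} {δ : ℝ}
    (hX : ∀ t, |μ.real {ω | X ω ≤ t} - H t| ≤ δ)
    (hG : ∀ ω ∉ B, |G ω (X ω) - H (X ω)| < 2 * δ) (hB : μ.real B ≤ δ) (x : ℝ) :
    |μ.real {ω | G ω (X ω) ≤ x} - uniformCDF x| ≤ 4 * δ := by
  have hY := abs_measureReal_comp_le_sub_uniformCDF_le μ hrange hmono hX
  have hupper := measureReal_le_le_add_of_abs_sub_lt μ hG x
  have hlower := measureReal_le_le_add_of_abs_sub_lt μ (Y := fun ω => G ω (X ω))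
    (Z := fun ω => H (X ω)) (fun ω hω => abs_sub_comm (G ω (X ω)) _ ▸ hG ω hω) (x - 2 * δ)
  rw [sub_add_cancel] at hlower
  have hδ : 0 ≤ δ := (abs_nonneg _).trans (hX 0)
  have hU₁ : |uniformCDF (x + 2 * δ) - uniformCDF x| ≤ 2 * δ :=
    (abs_uniformCDF_sub_le _ _).trans_eq (by rw [add_sub_cancel_left, abs_of_nonneg (by linarith)])
  have hU₂ : |uniformCDF (x - 2 * δ) - uniformCDF x| ≤ 2 * δ :=
    (abs_uniformCDF_sub_le _ _).trans_eq
      (by rw [sub_sub_cancel_left, abs_neg, abs_of_nonneg (by linarith)])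
  rw [abs_le] at hU₁ hU₂ ⊢
  have hY₁ := abs_le.1 (hY (x + 2 * δ))
  have hY₂ := abs_le.1 (hY (x - 2 * δ))
  constructor <;> linarith

end Measure

theorem prepivoted_statistic_uniform_limit_general
    {Ω : Type*} [MeasurableSpace Ω] (μ : Measure Ω) [IsProbabilityMeasure μ]
    (T : ℕ → Ω → ℝ)
    (Hn : ℕ → ℝ → ℝ) (H : ℝ → ℝ) (F : ℕ → Ω → ℝ → ℝ)
    (hHn : ∀ n x, Hn n x = (μ {ω | T n ω ≤ x}).toReal)
    (hHcont : Continuous H) (hHmono : StrictMono H)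
    (hHBot : Tendsto H atBot (nhds 0)) (hHTop : Tendsto H atTop (nhds 1))
    -- sup_x |Hₙ(x) − H(x)| → 0
    (hHnH : ∀ ε > (0:ℝ), ∀ᶠ n in atTop, ∀ x : ℝ, |Hn n x - H x| < ε)
    -- sup_x |Fₙ(x) − Hₙ(x)| → 0 in probability
    (hFnHn : ∀ ε > (0:ℝ),
      Tendsto (fun n => μ {ω | ∃ x : ℝ, ε ≤ |F n ω x - Hn n x|}) atTop (nhds 0)) :
    ∀ x : ℝ,
      Tendsto (fun n => (μ {ω | F n ω (T n ω) ≤ x}).toReal) atTop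
        (nhds (max 0 (min x 1))) := by
  intro x
  have hrange := range_eq_Ioo_of_strictMono hHcont hHmono hHBot hHTop
  refine Metric.tendsto_nhds.2 fun ε hε => ?_
  have hδ : 0 < ε / 5 := by positivity
  have hbad := (ENNReal.tendsto_toReal ENNReal.zero_ne_top).comp (hFnHn _ hδ)
  filter_upwards [hHnH _ hδ, hbad.eventually (gt_mem_nhds hδ)] with n hHnH_n hbad_n
  have hG : ∀ ω ∉ {ω | ∃ t, ε / 5 ≤ |F n ω t - Hn n t|},
      |F n ω (T n ω) - H (T n ω)| < 2 * (ε / 5) := fun ω hω => by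
    simp only [mem_ofPred_eq, not_exists, not_le] at hω
    linarith [abs_sub_le (F n ω (T n ω)) (Hn n (T n ω)) (H (T n ω)), hω (T n ω), hHnH_n (T n ω)]
  have hclose := abs_measureReal_estimator_le μ hrange hHmono (X := T n)
    (fun t => by rw [measureReal_def, ← hHn]; exact (hHnH_n t).le) hG hbad_n.le x
  rw [Real.dist_eq]
  exact hclose.trans_lt (by linarith)

/-- If `Tₙ` converges in distribution to a law with continuous strictly increasing CDF `H`
(`Hₙ` being the CDF of `Tₙ`, with `sup_x |Hₙ − H| → 0`), and `Fₙ` are random CDF estimators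
with `sup_x |Fₙ − Hₙ| → 0` in probability, then `Fₙ(Tₙ)` converges in distribution to the
uniform distribution on `[0,1]`: its CDF converges pointwise to `U(x) = max 0 (min x 1)`. -/
theorem prepivoted_statistic_uniform_limit
    {Ω : Type*} [MeasurableSpace Ω] (μ : Measure Ω) [IsProbabilityMeasure μ]
    (T : ℕ → Ω → ℝ) (hT : ∀ n, Measurable (T n))
    (Hn : ℕ → ℝ → ℝ) (H : ℝ → ℝ) (F : ℕ → Ω → ℝ → ℝ)
    (hHn : ∀ n x, Hn n x = (μ {ω | T n ω ≤ x}).toReal)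
    (hHcont : Continuous H) (hHmono : StrictMono H)
    (hHBot : Tendsto H atBot (nhds 0)) (hHTop : Tendsto H atTop (nhds 1))
    -- sup_x |Hₙ(x) − H(x)| → 0
    (hHnH : ∀ ε > (0:ℝ), ∀ᶠ n in atTop, ∀ x : ℝ, |Hn n x - H x| < ε)
    -- sup_x |Fₙ(x) − Hₙ(x)| → 0 in probability
    (hFnHn : ∀ ε > (0:ℝ),
      Tendsto (fun n => μ {ω | ∃ x : ℝ, ε ≤ |F n ω x - Hn n x|}) atTop (nhds 0)) :
    ∀ x : ℝ,
      Tendsto (fun n => (μ {ω | F n ω (T n ω) ≤ x}).toReal) atTop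
        (nhds (max 0 (min x 1))) :=
  prepivoted_statistic_uniform_limit_general μ T Hn H F hHn hHcont hHmono hHBot hHTop hHnH hFnHn
end

section
/- If a sequence of CDFs G_n on ℝ converges pointwise to a continuous CDF G, then the convergence is uniform: sup_x |G_n(x) − G(x)| → 0. -/
/-!
Fix `ε > 0`. Because the limit `L` is continuous and runs from `0` to `1`, finitely many points
`T` split the line into pieces on each of which `L` increases by at most `ε`; the two unbounded
pieces are handled by the bounds `0 ≤ G n ≤ 1`. Pointwise convergence is uniform on the finite
set `T`, and monotonicity of `G n` and `L` transfers closeness at the endpoints of a piece to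
the whole piece, at the cost of the increment of `L` across it.
-/

open Filter Set Topology

theorem Monotone.mem_Icc_of_tendsto {f : ℝ → ℝ} {a b : ℝ} (hf : Monotone f)
    (hbot : Tendsto f atBot (𝓝 a)) (htop : Tendsto f atTop (𝓝 b)) (x : ℝ) : f x ∈ Icc a b :=
  ⟨hf.le_of_tendsto hbot x, hf.ge_of_tendsto htop x⟩

theorem Continuous.Ioo_subset_range_of_tendsto {X α : Type*} [TopologicalSpace X]
    [PreconnectedSpace X] [LinearOrder α] [TopologicalSpace α] [OrderClosedTopology α]
    {f : X → α} {l₁ l₂ : Filter X} [l₁.NeBot] [l₂.NeBot] {a b : α} (hf : Continuous f)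
    (h₁ : Tendsto f l₁ (𝓝 a)) (h₂ : Tendsto f l₂ (𝓝 b)) : Ioo a b ⊆ range f := fun _ hc =>
  mem_range_of_exists_le_of_exists_ge hf
    ((h₁.eventually_lt_const hc.1).exists.imp fun _ => le_of_lt)
    ((h₂.eventually_const_lt hc.2).exists.imp fun _ => le_of_lt)

/-- Every `x` is bracketed by points `a ≤ x ≤ b` of `T` with `L x - L a ≤ δ` and `L b - L x ≤ δ`,
where a missing `a` (resp. `b`) is replaced by `-∞` with `L = 0` (resp. `+∞` with `L = 1`). -/
def IsBracketingSet (L : ℝ → ℝ) (δ : ℝ) (T : Set ℝ) : Prop :=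
  ∀ x, (L x ≤ δ ∨ ∃ a ∈ T, a ≤ x ∧ L x ≤ L a + δ) ∧
    (1 - δ ≤ L x ∨ ∃ b ∈ T, x ≤ b ∧ L b ≤ L x + δ)

theorem abs_sub_le_of_isBracketingSet {F L : ℝ → ℝ} {δ ε : ℝ} {T : Set ℝ}
    (hT : IsBracketingSet L δ T) (hF : Monotone F) (hF01 : ∀ x, F x ∈ Icc 0 1) (hε : 0 ≤ ε)
    (hclose : ∀ t ∈ T, |F t - L t| ≤ ε) (x : ℝ) : |F x - L x| ≤ δ + ε := by
  obtain ⟨hlower, hupper⟩ := hT x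
  rw [abs_le]
  constructor
  · rcases hlower with hx | ⟨a, haT, hax, ha⟩
    · linarith [(hF01 x).1]
    · linarith [hF hax, (abs_le.1 (hclose a haT)).1]
  · rcases hupper with hx | ⟨b, hbT, hxb, hb⟩
    · linarith [(hF01 x).2]
    · linarith [hF hxb, (abs_le.1 (hclose b hbT)).2]

theorem Continuous.exists_levels_of_tendsto {L : ℝ → ℝ} (hcont : Continuous L)
    (hbot : Tendsto L atBot (𝓝 0)) (htop : Tendsto L atTop (𝓝 1)) (N : ℕ) :
    ∃ q : ℤ → ℝ, ∀ k : ℤ, 0 < k → k < N → N * L (q k) = k := by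
  have hlevel : ∀ k : ℤ, ∃ t, 0 < k → k < N → N * L t = k := fun k => by
    by_cases hk : 0 < k ∧ k < N
    · obtain ⟨hk₀, hkN⟩ := hk
      have hN0 : (0 : ℝ) < N := by exact_mod_cast hk₀.trans hkN
      have hk_mem : (k / N : ℝ) ∈ Ioo 0 1 :=
        ⟨div_pos (by exact_mod_cast hk₀) hN0, (div_lt_one hN0).2 (by exact_mod_cast hkN)⟩
      obtain ⟨t, ht⟩ := hcont.Ioo_subset_range_of_tendsto hbot htop hk_mem
      exact ⟨t, fun _ _ => by rw [ht]; field_simp⟩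
    · exact ⟨0, fun h₁ h₂ => absurd ⟨h₁, h₂⟩ hk⟩
  choose q hq using hlevel
  exact ⟨q, hq⟩

theorem exists_finite_isBracketingSet {L : ℝ → ℝ} (hmono : Monotone L) (hcont : Continuous L)
    (hbot : Tendsto L atBot (𝓝 0)) (htop : Tendsto L atTop (𝓝 1)) {δ : ℝ} (hδ : 0 < δ) :
    ∃ T : Set ℝ, T.Finite ∧ IsBracketingSet L δ T := by
  obtain ⟨N, hN⟩ := exists_nat_gt (2 / δ)
  have hN0 : (0 : ℝ) < N := (by positivity : 0 < 2 / δ).trans hN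
  have hNδ : 2 < N * δ := by rwa [div_lt_iff₀ hδ] at hN
  obtain ⟨q, hq⟩ := hcont.exists_levels_of_tendsto hbot htop N
  refine ⟨q '' Ioo 0 N, (finite_Ioo _ _).image q, fun x => ?_⟩
  obtain ⟨hLx₀, hLx₁⟩ := hmono.mem_Icc_of_tendsto hbot htop x
  -- `q (k - 1)` and `q (k + 1)` bracket `x`: their levels differ from `L x` strictly, which is
  -- what lets monotonicity of `L` order them against `x`.
  set k := ⌊N * L x⌋
  have hk₁ : (k : ℝ) ≤ N * L x := Int.floor_le _
  have hk₂ : N * L x < k + 1 := Int.lt_floor_add_one _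
  constructor
  · by_cases hk : k ≤ 1
    · left
      have : (k : ℝ) ≤ 1 := by exact_mod_cast hk
      nlinarith
    · right
      have hkN : k ≤ N := by exact_mod_cast (by nlinarith : (k : ℝ) ≤ N)
      have hqk := hq (k - 1) (by omega) (by omega)
      push_cast at hqk
      refine ⟨q (k - 1), mem_image_of_mem _ ⟨by omega, by omega⟩, ?_, by nlinarith⟩
      exact (hmono.reflect_lt (by nlinarith)).le
  · by_cases hk : (N : ℤ) ≤ k + 1
    · left
      have : (N : ℝ) ≤ k + 1 := by exact_mod_cast hk
      nlinarith
    · right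
      have hk₀ : 0 ≤ k := Int.floor_nonneg.2 (by positivity)
      have hqk := hq (k + 1) (by omega) (by omega)
      push_cast at hqk
      refine ⟨q (k + 1), mem_image_of_mem _ ⟨by omega, by omega⟩, ?_, by nlinarith⟩
      exact (hmono.reflect_lt (by nlinarith)).le

theorem tendstoUniformly_of_monotone_of_tendsto {ι : Type*} {p : Filter ι} {F : ι → ℝ → ℝ}
    {L : ℝ → ℝ} (hF : ∀ i, Monotone (F i)) (hF01 : ∀ i x, F i x ∈ Icc 0 1)
    (hLmono : Monotone L) (hLcont : Continuous L) (hLbot : Tendsto L atBot (𝓝 0))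
    (hLtop : Tendsto L atTop (𝓝 1)) (hpt : ∀ x, Tendsto (fun i => F i x) p (𝓝 (L x))) :
    TendstoUniformly F L p := by
  rw [Metric.tendstoUniformly_iff]
  intro ε hε
  obtain ⟨T, hTfin, hT⟩ := exists_finite_isBracketingSet hLmono hLcont hLbot hLtop (half_pos hε)
  have hclose : ∀ᶠ i in p, ∀ t ∈ T, dist (F i t) (L t) < ε / 4 :=
    (eventually_all_finite hTfin).2 fun t _ => Metric.tendsto_nhds.1 (hpt t) _ (by positivity)
  filter_upwards [hclose] with i hi x
  rw [dist_comm, Real.dist_eq]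
  calc |F i x - L x| ≤ ε / 2 + ε / 4 :=
        abs_sub_le_of_isBracketingSet hT (hF i) (hF01 i) (by positivity)
          (fun t ht => (hi t ht).le) x
    _ < ε := by linarith

theorem TendstoUniformly.tendsto_iSup_abs_sub {ι α : Type*} {p : Filter ι} {F : ι → α → ℝ}
    {f : α → ℝ} (h : TendstoUniformly F f p) :
    Tendsto (fun i => ⨆ x, |F i x - f x|) p (𝓝 0) := by
  rw [Metric.tendstoUniformly_iff] at h
  refine Metric.tendsto_nhds.2 fun ε hε => ?_
  filter_upwards [h (ε / 2) (half_pos hε)] with i hi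
  have hsup : ⨆ x, |F i x - f x| ≤ ε / 2 :=
    Real.iSup_le (fun x => by rw [abs_sub_comm, ← Real.dist_eq]; exact (hi x).le) (by positivity)
  rw [Real.dist_eq, sub_zero, abs_of_nonneg (Real.iSup_nonneg fun _ => abs_nonneg _)]
  linarith

theorem polya_uniform_convergence_general
    (G : ℕ → ℝ → ℝ) (L : ℝ → ℝ)
    (hGmono : ∀ n, Monotone (G n))
    (hGBot : ∀ n, Tendsto (G n) atBot (nhds 0))
    (hGTop : ∀ n, Tendsto (G n) atTop (nhds 1))
    (hLmono : Monotone L) (hLcont : Continuous L)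
    (hLBot : Tendsto L atBot (nhds 0)) (hLTop : Tendsto L atTop (nhds 1))
    (hpt : ∀ x : ℝ, Tendsto (fun n => G n x) atTop (nhds (L x))) :
    Tendsto (fun n => ⨆ x : ℝ, |G n x - L x|) atTop (nhds 0) := by
  have hG01 : ∀ n x, G n x ∈ Icc 0 1 := fun n =>
    (hGmono n).mem_Icc_of_tendsto (hGBot n) (hGTop n)
  exact (tendstoUniformly_of_monotone_of_tendsto hGmono hG01 hLmono hLcont hLBot hLTop
    hpt).tendsto_iSup_abs_sub

/-- Polya's theorem: pointwise convergence of CDFs to a continuous CDF is uniform. -/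
theorem polya_uniform_convergence
    (G : ℕ → ℝ → ℝ) (L : ℝ → ℝ)
    (hGmono : ∀ n, Monotone (G n))
    (hGRC : ∀ n x, ContinuousWithinAt (G n) (Set.Ici x) x)
    (hGBot : ∀ n, Tendsto (G n) atBot (nhds 0))
    (hGTop : ∀ n, Tendsto (G n) atTop (nhds 1))
    (hLmono : Monotone L) (hLcont : Continuous L)
    (hLBot : Tendsto L atBot (nhds 0)) (hLTop : Tendsto L atTop (nhds 1))
    (hpt : ∀ x : ℝ, Tendsto (fun n => G n x) atTop (nhds (L x))) :
    Tendsto (fun n => ⨆ x : ℝ, |G n x - L x|) atTop (nhds 0) :=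
  polya_uniform_convergence_general G L hGmono hGBot hGTop hLmono hLcont hLBot hLTop hpt
end

section
/- Conversely, with D, D' as above (jointly Gaussian, Cov(D_{ji}, D'_{j'i'}) = Σ̄_{jj'} independent of columns), if some column ℓ of a k×m matrix C̄ has nonzero column sum s ≠ 0 and Σ̄_{jj} > 0 for some j, then Cov((D C̄)_{jℓ}, (D' C̄)_{jℓ}) = s² Σ̄_{jj} > 0, so vec(D C̄) and vec(D' C̄) are not independent. -/
open MeasureTheory ProbabilityTheory

/-- Matrices inherit the product measurable structure of functions. -/
instance matrixMeasurableSpace {d k : ℕ} : MeasurableSpace (Matrix (Fin d) (Fin k) ℝ) :=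
  inferInstanceAs (MeasurableSpace ((Fin d) → (Fin k) → ℝ))

/-! If the `ℓ`-th column of `C̄` sums to `s`, then `(D C̄)_{jℓ} = ∑ᵢ D_{ji} C̄_{iℓ}` and
bilinearity turns the column-independent cross-covariance into
`E[(D C̄)_{jℓ} (D' C̄)_{jℓ}] = s² Σ̄_{jj} > 0`. Independence of `D C̄` and `D' C̄` would instead
make this expectation the product of the means, which vanishes because `D` is centred. -/

lemma measurable_matrix_apply {d k : ℕ} (j : Fin d) (i : Fin k) :
    Measurable fun M : Matrix (Fin d) (Fin k) ℝ => M j i :=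
  (measurable_pi_apply i).comp (measurable_pi_apply j)

section

variable {Ω ι κ ν : Type*} [MeasurableSpace Ω] {μ : Measure Ω} [Fintype κ]

lemma MeasureTheory.Integrable.of_integrable_mul_self [IsFiniteMeasure μ] {f : Ω → ℝ}
    (hf : AEStronglyMeasurable f μ) (hff : Integrable (fun ω => f ω * f ω) μ) :
    Integrable f μ :=
  ((memLp_two_iff_integrable_sq hf).2 (by simpa only [sq] using hff)).integrable one_le_two

lemma measurable_matrix_mul_apply {d k : ℕ} {A : Ω → Matrix (Fin d) (Fin k) ℝ}
    (hA : Measurable A) (C : Matrix (Fin k) ν ℝ) (j : Fin d) (ℓ : ν) :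
    Measurable fun ω => (A ω * C) j ℓ := by
  simp only [Matrix.mul_apply]
  exact Finset.measurable_sum _ fun i _ => ((measurable_matrix_apply j i).comp hA).mul_const _

lemma integrable_matrix_mul_apply {A : Ω → Matrix ι κ ℝ} (C : Matrix κ ν ℝ) (j : ι) (ℓ : ν)
    (hA : ∀ i, Integrable (fun ω => A ω j i) μ) :
    Integrable (fun ω => (A ω * C) j ℓ) μ := by
  simp only [Matrix.mul_apply]
  exact integrable_finsetSum _ fun i _ => (hA i).mul_const _

lemma integral_matrix_mul_apply {A : Ω → Matrix ι κ ℝ} (C : Matrix κ ν ℝ) (j : ι) (ℓ : ν)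
    (hA : ∀ i, Integrable (fun ω => A ω j i) μ) :
    ∫ ω, (A ω * C) j ℓ ∂μ = ∑ i, (∫ ω, A ω j i ∂μ) * C i ℓ := by
  simp only [Matrix.mul_apply]
  rw [integral_finsetSum _ fun i _ => (hA i).mul_const _]
  simp only [integral_mul_const]

lemma integral_matrix_mul_apply_mul_matrix_mul_apply {A B : Ω → Matrix ι κ ℝ}
    (C : Matrix κ ν ℝ) (j j' : ι) (ℓ : ν) {σ : ℝ}
    (hAB : ∀ i i', Integrable (fun ω => A ω j i * B ω j' i') μ)
    (hσ : ∀ i i', ∫ ω, A ω j i * B ω j' i' ∂μ = σ) :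
    ∫ ω, (A ω * C) j ℓ * (B ω * C) j' ℓ ∂μ = (∑ i, C i ℓ) ^ 2 * σ := by
  have hterm : ∀ i i', Integrable (fun ω => A ω j i * B ω j' i' * (C i ℓ * C i' ℓ)) μ :=
    fun i i' => (hAB i i').mul_const _
  calc ∫ ω, (A ω * C) j ℓ * (B ω * C) j' ℓ ∂μ
      = ∫ ω, ∑ i, ∑ i', A ω j i * B ω j' i' * (C i ℓ * C i' ℓ) ∂μ := by
        simp only [Matrix.mul_apply, Finset.sum_mul_sum, mul_mul_mul_comm]
    _ = ∑ i, ∑ i', (∫ ω, A ω j i * B ω j' i' ∂μ) * (C i ℓ * C i' ℓ) := by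
        rw [integral_finsetSum _ fun i _ => integrable_finsetSum _ fun i' _ => hterm i i']
        simp only [integral_finsetSum _ fun i' _ => hterm _ i', integral_mul_const]
    _ = (∑ i, C i ℓ) ^ 2 * σ := by
        simp only [hσ, ← Finset.mul_sum, sq, Finset.sum_mul_sum]
        ring

end

theorem contrast_necessary_for_independence_general
    {Ω : Type*} [MeasurableSpace Ω] (μ : Measure Ω) [IsProbabilityMeasure μ]
    {d k m : ℕ}
    (D D' : Ω → Matrix (Fin d) (Fin k) ℝ)
    (hD : Measurable D) (hD' : Measurable D')
    (hmean : ∀ j i, (∫ ω, D ω j i ∂μ) = 0 ∧ (∫ ω, D' ω j i ∂μ) = 0)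
    (hint : ∀ j i j' i', Integrable (fun ω => D ω j i * D' ω j' i') μ)
    (hint2 : ∀ j i j' i', Integrable (fun ω => D ω j i * D ω j' i') μ)
    (Sbar : Matrix (Fin d) (Fin d) ℝ)
    (hcov : ∀ (j j' : Fin d) (i i' : Fin k),
      (∫ ω, D ω j i * D' ω j' i' ∂μ) = Sbar j j')
    (Cbar : Matrix (Fin k) (Fin m) ℝ)
    (ℓ : Fin m) (s : ℝ) (hs : s = ∑ i : Fin k, Cbar i ℓ) (hs0 : s ≠ 0)
    (j : Fin d) (hSjj : 0 < Sbar j j) :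
    (∫ ω, (D ω * Cbar) j ℓ * (D' ω * Cbar) j ℓ ∂μ) = s ^ 2 * Sbar j j ∧
      0 < s ^ 2 * Sbar j j ∧
      ¬ IndepFun (fun ω => D ω * Cbar) (fun ω => D' ω * Cbar) μ := by
  have hcovCbar : ∫ ω, (D ω * Cbar) j ℓ * (D' ω * Cbar) j ℓ ∂μ = s ^ 2 * Sbar j j := by
    rw [hs]
    exact integral_matrix_mul_apply_mul_matrix_mul_apply Cbar j j ℓ (hint j · j ·) (hcov j j)
  have hpos : 0 < s ^ 2 * Sbar j j := by positivity
  refine ⟨hcovCbar, hpos, fun hind => hpos.ne' ?_⟩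
  have hDint : ∀ i, Integrable (fun ω => D ω j i) μ := fun i =>
    .of_integrable_mul_self ((measurable_matrix_apply j i).comp hD).aestronglyMeasurable
      (hint2 j i j i)
  have hfactor : ∫ ω, (D ω * Cbar) j ℓ * (D' ω * Cbar) j ℓ ∂μ
      = (∫ ω, (D ω * Cbar) j ℓ ∂μ) * ∫ ω, (D' ω * Cbar) j ℓ ∂μ :=
    (hind.comp (measurable_matrix_apply j ℓ) (measurable_matrix_apply j ℓ)
      ).integral_fun_mul_eq_mul_integral
      (integrable_matrix_mul_apply Cbar j ℓ hDint).aestronglyMeasurable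
      (measurable_matrix_mul_apply hD' Cbar j ℓ).aestronglyMeasurable
  rw [← hcovCbar, hfactor, integral_matrix_mul_apply Cbar j ℓ hDint]
  simp only [(hmean j _).1, zero_mul, Finset.sum_const_zero]

/-- Necessity of the contrast condition: with `D, D'` jointly Gaussian mean-zero with
column-independent cross-covariance `Σ̄`, if some column `ℓ` of `C̄` has nonzero sum `s` and
`Σ̄_{jj} > 0`, then `Cov((DC̄)_{jℓ}, (D'C̄)_{jℓ}) = s² Σ̄_{jj} > 0`, so `vec(D C̄)` and
`vec(D' C̄)` are not independent. -/
theorem contrast_necessary_for_independence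
    {Ω : Type*} [MeasurableSpace Ω] (μ : Measure Ω) [IsProbabilityMeasure μ]
    {d k m : ℕ}
    (D D' : Ω → Matrix (Fin d) (Fin k) ℝ)
    (hD : Measurable D) (hD' : Measurable D')
    (hGauss : ∀ L : (Matrix (Fin d) (Fin k) ℝ × Matrix (Fin d) (Fin k) ℝ) →ₗ[ℝ] ℝ,
      ∃ (mLaw : ℝ) (v : NNReal),
        μ.map (fun ω => L (D ω, D' ω)) = gaussianReal mLaw v)
    (hmean : ∀ j i, (∫ ω, D ω j i ∂μ) = 0 ∧ (∫ ω, D' ω j i ∂μ) = 0)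
    (hint : ∀ j i j' i', Integrable (fun ω => D ω j i * D' ω j' i') μ)
    (hint2 : ∀ j i j' i', Integrable (fun ω => D ω j i * D ω j' i') μ)
    (hint3 : ∀ j i j' i', Integrable (fun ω => D' ω j i * D' ω j' i') μ)
    (Sbar : Matrix (Fin d) (Fin d) ℝ)
    (hcov : ∀ (j j' : Fin d) (i i' : Fin k),
      (∫ ω, D ω j i * D' ω j' i' ∂μ) = Sbar j j')
    (Cbar : Matrix (Fin k) (Fin m) ℝ)
    (ℓ : Fin m) (s : ℝ) (hs : s = ∑ i : Fin k, Cbar i ℓ) (hs0 : s ≠ 0)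
    (j : Fin d) (hSjj : 0 < Sbar j j) :
    (∫ ω, (D ω * Cbar) j ℓ * (D' ω * Cbar) j ℓ ∂μ) = s ^ 2 * Sbar j j ∧
      0 < s ^ 2 * Sbar j j ∧
      ¬ IndepFun (fun ω => D ω * Cbar) (fun ω => D' ω * Cbar) μ :=
  contrast_necessary_for_independence_general μ D D' hD hD' hmean hint hint2 Sbar hcov Cbar ℓ s hs
    hs0 j hSjj
end

section
/- Suppose sup_x |F_n(x) − H_n(x)| → 0 in probability and sup_x |H_n(x) − H(x)| → 0 where H is a continuous strictly increasing CDF. Define F_n^{-1}(u) = inf{x : F_n(x) ≥ u} and F̃_n^{-1}(u) = sup{x : F_n(x) ≤ u}. Then for every u ∈ (0,1), both F_n^{-1}(u) and F̃_n^{-1}(u) converge in probability to H^{-1}(u). -/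
/-!
If a monotone `g` is uniformly within `δ := min (H (q + η) - u) (u - H (q - η))` of `H`, then
`g (q - η) < u < g (q + η)`, which traps both `inf {x | u ≤ g x}` and `sup {x | g x ≤ u}` in
`[q - η, q + η]`. By the triangle inequality `Fₙ(ω)` is that close to `H` once `Hₙ` is within
`δ / 2` of `H` and `ω` avoids the event `{∃ x, δ / 2 ≤ |Fₙ(ω)(x) − Hₙ(x)|}`, whose probability
tends to `0`.
-/

open MeasureTheory Filter Set Topology

section Quantile

variable {α β : Type*} [ConditionallyCompleteLinearOrder α] [Preorder β]
  {f : α → β} {a b : α} {u : β}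

theorem Monotone.csInf_setOf_le_mem_Icc (hf : Monotone f) (ha : f a < u) (hb : u ≤ f b) :
    sInf {x | u ≤ f x} ∈ Icc a b := by
  have hlower : a ∈ lowerBounds {x | u ≤ f x} := fun y hy =>
    le_of_not_gt fun hya => (ha.trans_le hy).not_ge (hf hya.le)
  exact ⟨le_csInf ⟨b, hb⟩ hlower, csInf_le ⟨a, hlower⟩ hb⟩

theorem Monotone.csSup_setOf_le_mem_Icc (hf : Monotone f) (ha : f a ≤ u) (hb : u < f b) :
    sSup {x | f x ≤ u} ∈ Icc a b := by
  have hupper : b ∈ upperBounds {x | f x ≤ u} := fun y hy =>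
    le_of_not_gt fun hby => (hy.trans_lt hb).not_ge (hf hby.le)
  exact ⟨le_csSup ⟨b, hupper⟩ ha, csSup_le ⟨a, ha⟩ hupper⟩

end Quantile

theorem StrictMono.exists_quantiles_near_of_uniform_near {H : ℝ → ℝ} (hH : StrictMono H)
    {q u ε : ℝ} (hq : H q = u) (hε : 0 < ε) :
    ∃ δ > 0, ∀ g : ℝ → ℝ, Monotone g → (∀ x, |g x - H x| < δ) →
      |sInf {x | u ≤ g x} - q| < ε ∧ |sSup {x | g x ≤ u} - q| < ε := by
  set η := ε / 2
  have hη : 0 < η := half_pos hε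
  have hηε : η < ε := half_lt_self hε
  have hright : u < H (q + η) := hq ▸ hH (lt_add_of_pos_right q hη)
  have hleft : H (q - η) < u := hq ▸ hH (sub_lt_self q hη)
  refine ⟨min (H (q + η) - u) (u - H (q - η)), lt_min (sub_pos.2 hright) (sub_pos.2 hleft), ?_⟩
  intro g hg hgH
  have hg_right : u < g (q + η) := by
    linarith [(abs_lt.1 (hgH (q + η))).1, min_le_left (H (q + η) - u) (u - H (q - η))]
  have hg_left : g (q - η) < u := by
    linarith [(abs_lt.1 (hgH (q - η))).2, min_le_right (H (q + η) - u) (u - H (q - η))]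
  have hInf := hg.csInf_setOf_le_mem_Icc hg_left hg_right.le
  have hSup := hg.csSup_setOf_le_mem_Icc hg_left.le hg_right
  constructor <;> rw [abs_lt] <;> constructor
  all_goals linarith [hInf.1, hInf.2, hSup.1, hSup.2, hηε]

theorem MeasureTheory.tendsto_measure_zero_of_eventually_subset {Ω ι : Type*}
    [MeasurableSpace Ω] {μ : Measure Ω} {l : Filter ι} {s t : ι → Set Ω}
    (ht : Tendsto (fun i => μ (t i)) l (𝓝 0)) (hst : ∀ᶠ i in l, s i ⊆ t i) :
    Tendsto (fun i => μ (s i)) l (𝓝 0) :=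
  tendsto_of_tendsto_of_tendsto_of_le_of_le' tendsto_const_nhds ht
    (Eventually.of_forall fun _ => zero_le) (hst.mono fun _ h => measure_mono h)

theorem two_sided_quantile_convergence_general
    {Ω : Type*} [MeasurableSpace Ω] (μ : Measure Ω)
    (F : ℕ → Ω → ℝ → ℝ) (Hn : ℕ → ℝ → ℝ) (H : ℝ → ℝ)
    (hFmono : ∀ n ω, Monotone (F n ω))
    (hHmono : StrictMono H)
    -- sup_x |Fₙ(x) − Hₙ(x)| → 0 in probability
    (hFH : ∀ ε > (0:ℝ),
      Tendsto (fun n => μ {ω | ∃ x : ℝ, ε ≤ |F n ω x - Hn n x|}) atTop (nhds 0))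
    -- sup_x |Hₙ(x) − H(x)| → 0
    (hHnH : ∀ ε > (0:ℝ), ∀ᶠ n in atTop, ∀ x : ℝ, |Hn n x - H x| < ε)
    (u : ℝ) (q : ℝ) (hq : H q = u) :
    (∀ ε > (0:ℝ),
        Tendsto (fun n => μ {ω | ε ≤ |sInf {x : ℝ | u ≤ F n ω x} - q|}) atTop (nhds 0)) ∧
      (∀ ε > (0:ℝ),
        Tendsto (fun n => μ {ω | ε ≤ |sSup {x : ℝ | F n ω x ≤ u} - q|}) atTop (nhds 0)) := by
  have hbad : ∀ ε > (0:ℝ), ∃ δ > (0:ℝ), ∀ᶠ n in atTop,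
      {ω | ε ≤ |sInf {x | u ≤ F n ω x} - q|} ∪ {ω | ε ≤ |sSup {x | F n ω x ≤ u} - q|} ⊆
        {ω | ∃ x, δ ≤ |F n ω x - Hn n x|} := by
    intro ε hε
    obtain ⟨δ, hδ, hquantile⟩ := hHmono.exists_quantiles_near_of_uniform_near hq hε
    refine ⟨δ / 2, half_pos hδ, (hHnH (δ / 2) (half_pos hδ)).mono fun n hHn ω hω => ?_⟩
    by_contra! hF
    simp only [mem_ofPred_eq, not_exists, not_le] at hF
    have hnear := hquantile _ (hFmono n ω) fun x => calc
      |F n ω x - H x| ≤ |F n ω x - Hn n x| + |Hn n x - H x| := abs_sub_le _ _ _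
      _ < δ / 2 + δ / 2 := add_lt_add (hF x) (hHn x)
      _ = δ := add_halves δ
    rcases hω with hInf | hSup
    exacts [hnear.1.not_ge hInf, hnear.2.not_ge hSup]
  constructor <;> intro ε hε <;> obtain ⟨δ, hδ, hn⟩ := hbad ε hε
  · exact tendsto_measure_zero_of_eventually_subset (hFH δ hδ)
      (hn.mono fun _ h => subset_union_left.trans h)
  · exact tendsto_measure_zero_of_eventually_subset (hFH δ hδ)
      (hn.mono fun _ h => subset_union_right.trans h)

/-- Two-sided quantile convergence: if `sup_x |Fₙ(x) − Hₙ(x)| → 0` in probability and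
`sup_x |Hₙ(x) − H(x)| → 0` with `H` a continuous strictly increasing CDF, then for every
`u ∈ (0,1)` both `Fₙ⁻¹(u) = inf{x : Fₙ(x) ≥ u}` and `F̃ₙ⁻¹(u) = sup{x : Fₙ(x) ≤ u}`
converge in probability to `H⁻¹(u)`. -/
theorem two_sided_quantile_convergence
    {Ω : Type*} [MeasurableSpace Ω] (μ : Measure Ω) [IsProbabilityMeasure μ]
    (F : ℕ → Ω → ℝ → ℝ) (Hn : ℕ → ℝ → ℝ) (H : ℝ → ℝ)
    (hFmono : ∀ n ω, Monotone (F n ω))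
    (hFrange : ∀ n ω x, F n ω x ∈ Set.Icc (0:ℝ) 1)
    (hHnMono : ∀ n, Monotone (Hn n))
    (hHnRC : ∀ n x, ContinuousWithinAt (Hn n) (Set.Ici x) x)
    (hHnBot : ∀ n, Tendsto (Hn n) atBot (nhds 0))
    (hHnTop : ∀ n, Tendsto (Hn n) atTop (nhds 1))
    (hHcont : Continuous H) (hHmono : StrictMono H)
    (hHBot : Tendsto H atBot (nhds 0)) (hHTop : Tendsto H atTop (nhds 1))
    -- sup_x |Fₙ(x) − Hₙ(x)| → 0 in probability
    (hFH : ∀ ε > (0:ℝ),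
      Tendsto (fun n => μ {ω | ∃ x : ℝ, ε ≤ |F n ω x - Hn n x|}) atTop (nhds 0))
    -- sup_x |Hₙ(x) − H(x)| → 0
    (hHnH : ∀ ε > (0:ℝ), ∀ᶠ n in atTop, ∀ x : ℝ, |Hn n x - H x| < ε)
    (u : ℝ) (hu : u ∈ Set.Ioo (0:ℝ) 1) (q : ℝ) (hq : H q = u) :
    (∀ ε > (0:ℝ),
        Tendsto (fun n => μ {ω | ε ≤ |sInf {x : ℝ | u ≤ F n ω x} - q|}) atTop (nhds 0)) ∧
      (∀ ε > (0:ℝ),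
        Tendsto (fun n => μ {ω | ε ≤ |sSup {x : ℝ | F n ω x ≤ u} - q|}) atTop (nhds 0)) :=
  two_sided_quantile_convergence_general μ F Hn H hFmono hHmono hFH hHnH u q hq
end
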